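/- arXiv:2305.17410 — 4 statements merged into one kernel-verified Lean document; each statement's English description precedes it below -/
import Mathlib

section
/- Existence of energy sharing equilibrium: Suppose the social welfare problem min Σ_i -U_i(d_i) subject to p_i + q_i = d_i + d_i^f + D_i^T for all i, d ∈ Π_i [D_lo_i, D_hi_i], and q ∈ F_c, is feasible with optimal primal solution d̂ and dual multipliers ξ̂ for the balance constraints (i.e., (d̂, q̂, ξ̂) is a saddle point of the Lagrangian). Define d* = d̂, λ* = ξ̂, q_i* = d̂_i + d_i^f + D_i^T - p_i, and b_i* = m_a ξ̂_i + q_i*. Then (b*, d*, λ*) is a generalized Nash equilibrium of the energy sharing game: λ* minimizes Σ_i λ_i² subject to {-m_a λ_i + b_i*} ∈ F_c, and for each i, (b_i*, d_i*) minimizes -U_i(d_i) + λ_i*(-m_a λ_i* + b_i) subject to p_i - m_a λ_i* + b_i = d_i + d_i^f + D_i^T and d_i ∈ [D_lo_i, D_hi_i]. -/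
open Finset in
/-- Existence of energy sharing equilibrium. If `(d̂, q̂, ξ̂)` is a
saddle point of the Lagrangian of the social welfare problem, then
`(b*, d*, λ*)` with `d* = d̂`, `λ* = ξ̂`, `q*_i = d̂_i + dᶠ_i + Dᵀ_i - p_i`, and
`b*_i = mₐ ξ̂_i + q*_i` is a generalized Nash equilibrium of the energy sharing game. -/
theorem stmt_3 {n : ℕ} (ma : ℝ) (hma : 0 < ma)
    (U : Fin n → ℝ → ℝ) (hU : ∀ i, ConcaveOn ℝ Set.univ (U i))
    (p df DT Dlo Dhi : Fin n → ℝ)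
    (Fc : Set (Fin n → ℝ)) (hne : Fc.Nonempty) (hcomp : IsCompact Fc) (hconv : Convex ℝ Fc)
    (dhat qhat xihat : Fin n → ℝ)
    (hdhat : ∀ i, dhat i ∈ Set.Icc (Dlo i) (Dhi i)) (hqhat : qhat ∈ Fc)
    -- Lagrangian: L d q ξ = ∑ i, -U i (d i) + ∑ i, ξ i * (d i + df i + DT i - p i - q i)
    (hsaddle₁ : ∀ ξ : Fin n → ℝ,
      (∑ i, (-U i (dhat i)) + ∑ i, ξ i * (dhat i + df i + DT i - p i - qhat i))
        ≤ (∑ i, (-U i (dhat i)) + ∑ i, xihat i * (dhat i + df i + DT i - p i - qhat i)))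
    (hsaddle₂ : ∀ d q : Fin n → ℝ, (∀ i, d i ∈ Set.Icc (Dlo i) (Dhi i)) → q ∈ Fc →
      (∑ i, (-U i (dhat i)) + ∑ i, xihat i * (dhat i + df i + DT i - p i - qhat i))
        ≤ (∑ i, (-U i (d i)) + ∑ i, xihat i * (d i + df i + DT i - p i - q i))) :
    -- with b*_i = mₐ ξ̂_i + (d̂_i + dᶠ_i + Dᵀ_i - p_i):
    ((fun i => -ma * xihat i + (ma * xihat i + (dhat i + df i + DT i - p i))) ∈ Fc ∧
      -- λ* = ξ̂ solves the operator's market-clearing problem given b*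
      (∀ lam : Fin n → ℝ,
        (fun i => -ma * lam i + (ma * xihat i + (dhat i + df i + DT i - p i))) ∈ Fc →
        ∑ i, (xihat i) ^ 2 ≤ ∑ i, (lam i) ^ 2)) ∧
    -- for each i, (b*_i, d*_i) solves prosumer i's problem given λ* = ξ̂
    (∀ i,
      (p i - ma * xihat i + (ma * xihat i + (dhat i + df i + DT i - p i))
          = dhat i + df i + DT i) ∧
      dhat i ∈ Set.Icc (Dlo i) (Dhi i) ∧
      (∀ bi di : ℝ, p i - ma * xihat i + bi = di + df i + DT i →
        di ∈ Set.Icc (Dlo i) (Dhi i) →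
        -U i (dhat i)
            + xihat i * (-ma * xihat i + (ma * xihat i + (dhat i + df i + DT i - p i)))
          ≤ -U i di + xihat i * (-ma * xihat i + bi))) := by
  -- residuals of the balance constraints vanish
  have hzero : ∀ i, dhat i + df i + DT i - p i - qhat i = 0 := by
    have h1 : (∑ i, (-U i (dhat i)) +
        ∑ i, (xihat i + (dhat i + df i + DT i - p i - qhat i)) *
          (dhat i + df i + DT i - p i - qhat i))
        ≤ (∑ i, (-U i (dhat i)) +
        ∑ i, xihat i * (dhat i + df i + DT i - p i - qhat i)) :=
      hsaddle₁ (fun i => xihat i + (dhat i + df i + DT i - p i - qhat i))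
    have e : ∑ i, (xihat i + (dhat i + df i + DT i - p i - qhat i)) *
          (dhat i + df i + DT i - p i - qhat i)
        = ∑ i, xihat i * (dhat i + df i + DT i - p i - qhat i)
          + ∑ i, (dhat i + df i + DT i - p i - qhat i) ^ 2 := by
      rw [← Finset.sum_add_distrib]
      exact Finset.sum_congr rfl (fun i _ => by ring)
    have hsq : ∑ i, (dhat i + df i + DT i - p i - qhat i) ^ 2 ≤ 0 := by linarith
    have hsq0 : ∑ i, (dhat i + df i + DT i - p i - qhat i) ^ 2 = 0 :=
      le_antisymm hsq (Finset.sum_nonneg fun i _ => sq_nonneg _)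
    intro i
    have := (Finset.sum_eq_zero_iff_of_nonneg (fun i _ => sq_nonneg
      (dhat i + df i + DT i - p i - qhat i))).mp hsq0 i (Finset.mem_univ i)
    exact pow_eq_zero_iff two_ne_zero |>.mp this
  have hqeq : (fun i => -ma * xihat i + (ma * xihat i + (dhat i + df i + DT i - p i))) = qhat := by
    funext i
    have := hzero i
    ring_nf
    linarith
  have hzsum : ∑ i, xihat i * (dhat i + df i + DT i - p i - qhat i) = 0 :=
    Finset.sum_eq_zero fun i _ => by rw [hzero i]; ring
  refine ⟨⟨hqeq ▸ hqhat, ?_⟩, ?_⟩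
  · intro lam hmem
    have h2 := hsaddle₂ dhat
      (fun i => -ma * lam i + (ma * xihat i + (dhat i + df i + DT i - p i))) hdhat hmem
    have e2 : ∑ i, xihat i * (dhat i + df i + DT i - p i -
          (-ma * lam i + (ma * xihat i + (dhat i + df i + DT i - p i))))
        = ∑ i, (ma * (xihat i * lam i) - ma * xihat i ^ 2) :=
      Finset.sum_congr rfl (fun i _ => by ring)
    have h3 : 0 ≤ ∑ i, (ma * (xihat i * lam i) - ma * xihat i ^ 2) := by
      rw [← e2]; linarith [h2, hzsum]
    have h4 : ∑ i, (ma * (xihat i * lam i) - ma * xihat i ^ 2)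
        ≤ ∑ i, (ma / 2 * lam i ^ 2 - ma / 2 * xihat i ^ 2) :=
      Finset.sum_le_sum fun i _ => by nlinarith [sq_nonneg (lam i - xihat i)]
    have h5 : ∑ i, (ma / 2 * lam i ^ 2 - ma / 2 * xihat i ^ 2)
        = ma / 2 * ∑ i, lam i ^ 2 - ma / 2 * ∑ i, xihat i ^ 2 := by
      rw [Finset.sum_sub_distrib, Finset.mul_sum, Finset.mul_sum]
    nlinarith [h3, h4, h5]
  · intro i
    refine ⟨by ring, hdhat i, ?_⟩
    intro bi di hbal hbox
    have hd' : ∀ j, Function.update dhat i di j ∈ Set.Icc (Dlo j) (Dhi j) := by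
      intro j
      by_cases hj : j = i
      · subst hj; simpa using hbox
      · rw [Function.update_of_ne hj]; exact hdhat j
    have h2 := hsaddle₂ (Function.update dhat i di) qhat hd' hqhat
    have e1 : ∑ j, (-U j (Function.update dhat i di j))
        = ∑ j, (-U j (dhat j)) + (-U i di - (-U i (dhat i))) := by
      have e : ∑ j, ((-U j (Function.update dhat i di j)) - (-U j (dhat j)))
          = -U i di - (-U i (dhat i)) := by
        rw [Finset.sum_eq_single i]
        · rw [Function.update_self]
        · intro j _ hj; rw [Function.update_of_ne hj]; ring
        · intro h; exact absurd (Finset.mem_univ i) h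
      rw [Finset.sum_sub_distrib] at e
      linarith
    have e2 : ∑ j, xihat j * (Function.update dhat i di j + df j + DT j - p j - qhat j)
        = xihat i * (di - dhat i) := by
      have e : ∑ j, (xihat j * (Function.update dhat i di j + df j + DT j - p j - qhat j)
            - xihat j * (dhat j + df j + DT j - p j - qhat j))
          = xihat i * (di - dhat i) := by
        rw [Finset.sum_eq_single i]
        · rw [Function.update_self]; ring
        · intro j _ hj; rw [Function.update_of_ne hj]; ring
        · intro h; exact absurd (Finset.mem_univ i) h
      rw [Finset.sum_sub_distrib] at e
      linarith [hzsum]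
    rw [e1, e2] at h2
    have hbi : -ma * xihat i + bi = di + df i + DT i - p i := by linarith
    rw [hbi]
    nlinarith [h2, hzsum]
end

section
/- Uniqueness of equilibrium demand: If each U_i is strictly concave and the sets [D_lo_i, D_hi_i] and F_c are compact convex, then the social welfare problem min Σ_i -U_i(d_i) subject to the power balance, demand bounds, and q ∈ F_c attains a unique optimal demand vector d*, and consequently the demand profile at any generalized Nash equilibrium of the energy sharing game is unique and coincides with d*. -/
/-- Uniqueness of equilibrium demand. With strictly concave utilities
and compact convex constraint sets, the social welfare problem attains a unique
optimal demand vector `d*`; consequently the demand profile at any generalized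
Nash equilibrium (whose induced triple is a saddle point of the Lagrangian)
coincides with `d*`. -/
theorem stmt_4 {n : ℕ} (ma : ℝ) (hma : 0 < ma)
    (U : Fin n → ℝ → ℝ) (hU : ∀ i, StrictConcaveOn ℝ Set.univ (U i))
    (p df DT Dlo Dhi : Fin n → ℝ) (hD : ∀ i, Dlo i ≤ Dhi i)
    (Fc : Set (Fin n → ℝ)) (hne : Fc.Nonempty) (hcomp : IsCompact Fc) (hconv : Convex ℝ Fc)
    -- feasibility of the social welfare problem
    (hfeas : ∃ d q : Fin n → ℝ, (∀ i, d i ∈ Set.Icc (Dlo i) (Dhi i)) ∧ q ∈ Fc ∧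
      ∀ i, p i + q i = d i + df i + DT i) :
    ∃ dstar : Fin n → ℝ,
      -- d* is optimal for the social welfare problem
      ((∀ i, dstar i ∈ Set.Icc (Dlo i) (Dhi i)) ∧
        (∃ q ∈ Fc, ∀ i, p i + q i = dstar i + df i + DT i) ∧
        (∀ d q : Fin n → ℝ, (∀ i, d i ∈ Set.Icc (Dlo i) (Dhi i)) → q ∈ Fc →
          (∀ i, p i + q i = d i + df i + DT i) →
          ∑ i, (-U i (dstar i)) ≤ ∑ i, (-U i (d i)))) ∧
      -- d* is the unique optimal demand vector
      (∀ d : Fin n → ℝ,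
        ((∀ i, d i ∈ Set.Icc (Dlo i) (Dhi i)) ∧
          (∃ q ∈ Fc, ∀ i, p i + q i = d i + df i + DT i) ∧
          (∀ d' q' : Fin n → ℝ, (∀ i, d' i ∈ Set.Icc (Dlo i) (Dhi i)) → q' ∈ Fc →
            (∀ i, p i + q' i = d' i + df i + DT i) →
            ∑ i, (-U i (d i)) ≤ ∑ i, (-U i (d' i)))) → d = dstar) ∧
      -- any GNE (b, d, λ), whose triple (d, -mₐλ+b, λ) is a saddle point of the
      -- Lagrangian, has demand profile equal to d*
      (∀ b d lam : Fin n → ℝ,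
        (∀ i, d i ∈ Set.Icc (Dlo i) (Dhi i)) →
        (fun i => -ma * lam i + b i) ∈ Fc →
        (∀ ξ : Fin n → ℝ,
          (∑ i, (-U i (d i)) + ∑ i, ξ i * (d i + df i + DT i - p i - (-ma * lam i + b i)))
            ≤ (∑ i, (-U i (d i))
              + ∑ i, lam i * (d i + df i + DT i - p i - (-ma * lam i + b i)))) →
        (∀ d' q' : Fin n → ℝ, (∀ i, d' i ∈ Set.Icc (Dlo i) (Dhi i)) → q' ∈ Fc →
          (∑ i, (-U i (d i))
              + ∑ i, lam i * (d i + df i + DT i - p i - (-ma * lam i + b i)))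
            ≤ (∑ i, (-U i (d' i)) + ∑ i, lam i * (d' i + df i + DT i - p i - q' i))) →
        d = dstar) := by
  classical
  set g : (Fin n → ℝ) → (Fin n → ℝ) := fun d i => d i + df i + DT i - p i with hgdef
  set S : Set (Fin n → ℝ) := {d | (∀ i, d i ∈ Set.Icc (Dlo i) (Dhi i)) ∧ g d ∈ Fc} with hSdef
  set f : (Fin n → ℝ) → ℝ := fun d => ∑ i, (-U i (d i)) with hfdef
  -- balance forces q = g d
  have hqeq : ∀ d q : Fin n → ℝ, (∀ i, p i + q i = d i + df i + DT i) → q = g d := by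
    intro d q h
    funext i
    have := h i
    simp only [g]
    linarith
  have hgbal : ∀ d : Fin n → ℝ, ∀ i, p i + g d i = d i + df i + DT i := by
    intro d i; simp only [g]; ring
  -- S nonempty
  obtain ⟨d₀, q₀, hd₀, hq₀, hbal₀⟩ := hfeas
  have hd₀S : d₀ ∈ S := ⟨hd₀, by rw [← hqeq d₀ q₀ hbal₀]; exact hq₀⟩
  -- S compact
  have hgc : Continuous g := by
    rw [hgdef]
    exact continuous_pi fun i => (((continuous_apply i).add continuous_const).add continuous_const).sub continuous_const
  have hScomp : IsCompact S := by
    have : S = (Set.pi Set.univ fun i => Set.Icc (Dlo i) (Dhi i)) ∩ g ⁻¹' Fc := by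
      ext d
      simp only [hSdef, Set.mem_setOf_eq, Set.mem_inter_iff, Set.mem_pi, Set.mem_univ,
        true_implies, Set.mem_preimage]
    rw [this]
    exact (isCompact_univ_pi fun i => isCompact_Icc).inter_right
      (hcomp.isClosed.preimage hgc)
  -- S convex
  have hSconv : Convex ℝ S := by
    intro x hx y hy a b ha hb hab
    refine ⟨fun i => ?_, ?_⟩
    · have := (convex_Icc (Dlo i) (Dhi i)) (hx.1 i) (hy.1 i) ha hb hab
      simpa using this
    · have : g (a • x + b • y) = a • g x + b • g y := by
        funext i
        simp only [g, Pi.add_apply, Pi.smul_apply, smul_eq_mul]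
        linear_combination (p i - df i - DT i) * hab
      rw [this]
      exact hconv hx.2 hy.2 ha hb hab
  -- f continuous
  have hUc : ∀ i, Continuous (U i) := by
    intro i
    rw [← continuousOn_univ]
    exact (hU i).concaveOn.continuousOn isOpen_univ
  have hfc : Continuous f := by
    apply continuous_finset_sum
    intro i _
    exact ((hUc i).comp (continuous_apply i)).neg
  -- f strictly convex on S
  have hfsc : StrictConvexOn ℝ S f := by
    refine ⟨hSconv, ?_⟩
    intro x hx y hy hxy a b ha hb hab
    obtain ⟨j, hj⟩ : ∃ j, x j ≠ y j := by
      by_contra h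
      push_neg at h
      exact hxy (funext h)
    have hle : ∀ i ∈ Finset.univ, -U i ((a • x + b • y) i) ≤ a * (-U i (x i)) + b * (-U i (y i)) := by
      intro i _
      have h := (hU i).concaveOn.2 (Set.mem_univ (x i)) (Set.mem_univ (y i)) ha.le hb.le hab
      simp only [smul_eq_mul] at h
      simp only [Pi.add_apply, Pi.smul_apply, smul_eq_mul]
      linarith
    have hlt : -U j ((a • x + b • y) j) < a * (-U j (x j)) + b * (-U j (y j)) := by
      have h := (hU j).2 (Set.mem_univ (x j)) (Set.mem_univ (y j)) hj ha hb hab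
      simp only [smul_eq_mul] at h
      simp only [Pi.add_apply, Pi.smul_apply, smul_eq_mul]
      linarith
    calc f (a • x + b • y) < ∑ i, (a * (-U i (x i)) + b * (-U i (y i))) :=
          Finset.sum_lt_sum hle ⟨j, Finset.mem_univ j, hlt⟩
      _ = a * f x + b * f y := by
          rw [Finset.sum_add_distrib, ← Finset.mul_sum, ← Finset.mul_sum]
      _ = a • f x + b • f y := by simp [smul_eq_mul]
  -- minimizer
  obtain ⟨dstar, hdS, hmin⟩ := hScomp.exists_isMinOn ⟨d₀, hd₀S⟩ hfc.continuousOn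
  have hmin' : ∀ x ∈ S, f dstar ≤ f x := fun x hx => hmin hx
  -- uniqueness of minimizer
  have huniq : ∀ x ∈ S, (∀ y ∈ S, f x ≤ f y) → x = dstar := by
    intro x hxS hxmin
    by_contra hne'
    have heq : f x = f dstar := le_antisymm (hxmin dstar hdS) (hmin' x hxS)
    have hmem : (1/2 : ℝ) • x + (1/2 : ℝ) • dstar ∈ S :=
      hSconv hxS hdS (by norm_num) (by norm_num) (by norm_num)
    have hlt := hfsc.2 hxS hdS hne' (by norm_num : (0:ℝ) < 1/2) (by norm_num : (0:ℝ) < 1/2)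
      (by norm_num)
    have h2 := hmin' _ hmem
    simp only [smul_eq_mul] at hlt
    rw [heq] at hlt
    linarith
  refine ⟨dstar, ⟨hdS.1, ⟨g dstar, hdS.2, hgbal dstar⟩, ?_⟩, ?_, ?_⟩
  · -- optimality
    intro d q hd hq hbal
    have : d ∈ S := ⟨hd, by rw [← hqeq d q hbal]; exact hq⟩
    exact hmin' d this
  · -- uniqueness
    rintro d ⟨hd, ⟨q, hq, hbal⟩, hopt⟩
    have hdS' : d ∈ S := ⟨hd, by rw [← hqeq d q hbal]; exact hq⟩
    apply huniq d hdS'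
    intro y hy
    exact hopt y (g y) hy.1 hy.2 (hgbal y)
  · -- GNE part
    intro b d lam hd hqF hs1 hs2
    set qh : Fin n → ℝ := fun i => -ma * lam i + b i with hqh
    set r : Fin n → ℝ := fun i => d i + df i + DT i - p i - qh i with hr
    -- from first saddle inequality, r = 0
    have hr0 : ∀ i, r i = 0 := by
      have h := hs1 (fun i => lam i + r i)
      have h2 : ∑ i, (lam i + r i) * r i ≤ ∑ i, lam i * r i := by
        simpa [r, qh] using h
      have h3 : ∑ i, r i * r i ≤ 0 := by
        have : ∑ i, (lam i + r i) * r i = ∑ i, lam i * r i + ∑ i, r i * r i := by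
          rw [← Finset.sum_add_distrib]
          congr 1; funext i; ring
        linarith [h2, this ▸ h2]
      have h4 : ∑ i, r i * r i = 0 := le_antisymm h3
        (Finset.sum_nonneg fun i _ => mul_self_nonneg (r i))
      intro i
      have := (Finset.sum_eq_zero_iff_of_nonneg
        (fun i _ => mul_self_nonneg (r i))).mp h4 i (Finset.mem_univ i)
      exact mul_self_eq_zero.mp this
    have hgq : g d = qh := by
      funext i
      have := hr0 i
      simp only [r, g] at *
      linarith
    have hdS' : d ∈ S := ⟨hd, by rw [hgq]; exact hqF⟩
    apply huniq d hdS'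
    intro y hy
    have h := hs2 y (g y) hy.1 hy.2
    have hL : ∑ i, lam i * (d i + df i + DT i - p i - (-ma * lam i + b i)) = 0 := by
      apply Finset.sum_eq_zero
      intro i _
      have := hr0 i
      simp only [r, qh] at this
      rw [show d i + df i + DT i - p i - (-ma * lam i + b i) = 0 from this, mul_zero]
    have hR : ∑ i, lam i * (y i + df i + DT i - p i - g y i) = 0 := by
      apply Finset.sum_eq_zero
      intro i _
      simp only [g]
      ring
    rw [hL, hR] at h
    simpa [f] using h
end

section
/- Any generalized Nash equilibrium of the energy sharing game is socially optimal: if (b*, d*, λ*) is a GNE, then d* together with q* = -m_a λ* + b* solves the social welfare problem min Σ_i -U_i(d_i) subject to p_i + q_i = d_i + d_i^f + D_i^T, d_i ∈ [D_lo_i, D_hi_i], and q ∈ F_c, and λ* equals the vector of optimal dual multipliers of the balance constraints. -/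
private lemma aux_le_zero (A B : ℝ) (hB : 0 ≤ B)
    (h : ∀ t : ℝ, 0 < t → t ≤ 1 → 2 * t * A ≤ t ^ 2 * B) : A ≤ 0 := by
  by_contra hA
  push_neg at hA
  rcases eq_or_lt_of_le hB with hB0 | hB0
  · have := h 1 one_pos le_rfl
    nlinarith
  · set t := min 1 (A / B) with ht
    have ht0 : 0 < t := lt_min one_pos (div_pos hA hB0)
    have ht1 : t ≤ 1 := min_le_left _ _
    have htB : t * B ≤ A := by
      have h2 : t ≤ A / B := min_le_right _ _
      calc t * B ≤ (A / B) * B := by nlinarith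
        _ = A := div_mul_cancel₀ _ hB0.ne'
    have := h t ht0 ht1
    nlinarith

/-- Any generalized Nash equilibrium of the energy sharing game is
socially optimal: if `(b*, d*, λ*)` is a GNE, then `(d*, q*)` with
`q* = -mₐλ* + b*` solves the social welfare problem, and `λ*` is the vector of
optimal dual multipliers of the balance constraints (i.e. `(d*, q*, λ*)` is a
saddle point of the Lagrangian). -/
theorem stmt_5 {n : ℕ} (ma : ℝ) (hma : 0 < ma)
    (U : Fin n → ℝ → ℝ) (hU : ∀ i, ConcaveOn ℝ Set.univ (U i))
    (p df DT Dlo Dhi : Fin n → ℝ)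
    (Fc : Set (Fin n → ℝ)) (hne : Fc.Nonempty) (hcomp : IsCompact Fc) (hconv : Convex ℝ Fc)
    (bstar dstar lamstar : Fin n → ℝ)
    -- GNE: λ* solves the operator's problem given b*
    (hopfeas : (fun i => -ma * lamstar i + bstar i) ∈ Fc)
    (hopopt : ∀ lam : Fin n → ℝ, (fun i => -ma * lam i + bstar i) ∈ Fc →
      ∑ i, (lamstar i) ^ 2 ≤ ∑ i, (lam i) ^ 2)
    -- GNE: (b*_i, d*_i) solves prosumer i's problem given λ*
    (hprosfeas : ∀ i, p i - ma * lamstar i + bstar i = dstar i + df i + DT i)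
    (hprosbox : ∀ i, dstar i ∈ Set.Icc (Dlo i) (Dhi i))
    (hprosopt : ∀ i, ∀ bi di : ℝ,
      p i - ma * lamstar i + bi = di + df i + DT i →
      di ∈ Set.Icc (Dlo i) (Dhi i) →
      -U i (dstar i) + lamstar i * (-ma * lamstar i + bstar i)
        ≤ -U i di + lamstar i * (-ma * lamstar i + bi)) :
    -- (d*, q*) is feasible and optimal for the social welfare problem
    ((fun i => -ma * lamstar i + bstar i) ∈ Fc ∧
      (∀ i, p i + (-ma * lamstar i + bstar i) = dstar i + df i + DT i) ∧
      (∀ i, dstar i ∈ Set.Icc (Dlo i) (Dhi i)) ∧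
      (∀ d q : Fin n → ℝ, (∀ i, d i ∈ Set.Icc (Dlo i) (Dhi i)) → q ∈ Fc →
        (∀ i, p i + q i = d i + df i + DT i) →
        ∑ i, (-U i (dstar i)) ≤ ∑ i, (-U i (d i)))) ∧
    -- λ* is an optimal dual multiplier: (d*, q*, λ*) is a saddle point of the Lagrangian
    ((∀ ξ : Fin n → ℝ,
        (∑ i, (-U i (dstar i))
            + ∑ i, ξ i * (dstar i + df i + DT i - p i - (-ma * lamstar i + bstar i)))
          ≤ (∑ i, (-U i (dstar i))
            + ∑ i, lamstar i * (dstar i + df i + DT i - p i - (-ma * lamstar i + bstar i)))) ∧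
      (∀ d q : Fin n → ℝ, (∀ i, d i ∈ Set.Icc (Dlo i) (Dhi i)) → q ∈ Fc →
        (∑ i, (-U i (dstar i))
            + ∑ i, lamstar i * (dstar i + df i + DT i - p i - (-ma * lamstar i + bstar i)))
          ≤ (∑ i, (-U i (d i)) + ∑ i, lamstar i * (d i + df i + DT i - p i - q i)))) := by
  set qs : Fin n → ℝ := fun i => -ma * lamstar i + bstar i with hqs
  -- residual of (d*, q*) vanishes
  have hres : ∀ i, dstar i + df i + DT i - p i - qs i = 0 := by
    intro i
    have := hprosfeas i
    simp only [hqs]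
    linarith
  -- projection variational inequality: λ*·q ≤ λ*·q* for all q ∈ Fc
  have hproj : ∀ q ∈ Fc, ∑ i, lamstar i * q i ≤ ∑ i, lamstar i * qs i := by
    intro q hq
    set c : Fin n → ℝ := fun i => (q i - qs i) / ma with hc
    have hS : ∑ i, lamstar i * c i ≤ 0 := by
      apply aux_le_zero _ (∑ i, (c i) ^ 2)
        (Finset.sum_nonneg fun i _ => sq_nonneg _)
      intro t ht0 ht1
      have hqt : (fun i => (1 - t) * qs i + t * q i) ∈ Fc :=
        hconv hopfeas hq (by linarith) ht0.le (by ring)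
      have hlam := hopopt (fun i => lamstar i - t * c i) (by
        convert hqt using 2 with i
        simp only [hc]
        field_simp
        ring)
      have hexp : ∑ i, (lamstar i - t * c i) ^ 2
          = ∑ i, (lamstar i) ^ 2 - 2 * t * ∑ i, lamstar i * c i
            + t ^ 2 * ∑ i, (c i) ^ 2 := by
        rw [Finset.mul_sum, Finset.mul_sum, ← Finset.sum_sub_distrib,
          ← Finset.sum_add_distrib]
        apply Finset.sum_congr rfl
        intro i _
        ring
      rw [hexp] at hlam
      linarith
    have : ∑ i, lamstar i * c i = (∑ i, lamstar i * q i - ∑ i, lamstar i * qs i) / ma := by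
      rw [← Finset.sum_sub_distrib, Finset.sum_div]
      apply Finset.sum_congr rfl
      intro i _
      simp only [hc]
      field_simp
    rw [this] at hS
    have := div_nonpos_iff.mp hS
    rcases this with ⟨h1, _⟩ | ⟨h1, h2⟩
    · linarith
    · linarith
  -- key inequality: summed prosumer optimality + projection inequality
  have hkey : ∀ d q : Fin n → ℝ, (∀ i, d i ∈ Set.Icc (Dlo i) (Dhi i)) → q ∈ Fc →
      ∑ i, (-U i (dstar i)) ≤ ∑ i, (-U i (d i))
        + ∑ i, lamstar i * (d i + df i + DT i - p i - q i) := by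
    intro d q hbox hq
    have hsum : ∑ i, (-U i (dstar i) + lamstar i * qs i)
        ≤ ∑ i, (-U i (d i) + lamstar i * (d i + df i + DT i - p i)) := by
      apply Finset.sum_le_sum
      intro i _
      have := hprosopt i (d i + df i + DT i - p i + ma * lamstar i) (d i)
        (by ring) (hbox i)
      have heq : -ma * lamstar i + (d i + df i + DT i - p i + ma * lamstar i)
          = d i + df i + DT i - p i := by ring
      rw [heq] at this
      exact this
    have hq' := hproj q hq
    have e1 : ∑ i, (-U i (dstar i) + lamstar i * qs i)
        = ∑ i, (-U i (dstar i)) + ∑ i, lamstar i * qs i :=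
      Finset.sum_add_distrib
    have e2 : ∑ i, (-U i (d i) + lamstar i * (d i + df i + DT i - p i))
        = ∑ i, (-U i (d i)) + ∑ i, lamstar i * (d i + df i + DT i - p i) :=
      Finset.sum_add_distrib
    have e3 : ∑ i, lamstar i * (d i + df i + DT i - p i)
        = ∑ i, lamstar i * (d i + df i + DT i - p i - q i) + ∑ i, lamstar i * q i := by
      rw [← Finset.sum_add_distrib]
      apply Finset.sum_congr rfl
      intro i _
      ring
    rw [e1, e2, e3] at hsum
    linarith
  have hzero : ∑ i, lamstar i * (dstar i + df i + DT i - p i - qs i) = 0 := by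
    apply Finset.sum_eq_zero
    intro i _
    rw [hres i, mul_zero]
  refine ⟨⟨hopfeas, ?_, hprosbox, ?_⟩, ?_, ?_⟩
  · intro i
    have := hprosfeas i
    linarith
  · intro d q hbox hq hbal
    have := hkey d q hbox hq
    have : ∑ i, lamstar i * (d i + df i + DT i - p i - q i) = 0 := by
      apply Finset.sum_eq_zero
      intro i _
      have := hbal i
      have : d i + df i + DT i - p i - q i = 0 := by linarith
      rw [this, mul_zero]
    linarith [hkey d q hbox hq]
  · intro ξ
    have h1 : ∑ i, ξ i * (dstar i + df i + DT i - p i - qs i) = 0 := by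
      apply Finset.sum_eq_zero
      intro i _
      rw [hres i, mul_zero]
    rw [h1, hzero]
  · intro d q hbox hq
    rw [hzero]
    have := hkey d q hbox hq
    linarith
end

section
/- Polyhedral (Ben-Tal–Nemirovski) approximation soundness: suppose x₁, x₂, x₃ ∈ ℝ and there exist ξ^z, η^z for z = 0,…,Z satisfying ξ⁰ ≥ |x₁|, η⁰ ≥ |x₂|, the recursions ξ^z = cos(π/2^{z+1}) ξ^{z-1} + sin(π/2^{z+1}) η^{z-1} and η^z ≥ |−sin(π/2^{z+1}) ξ^{z-1} + cos(π/2^{z+1}) η^{z-1}| for 1 ≤ z ≤ Z, and ξ^Z ≤ x₃, η^Z ≤ tan(π/2^{Z+1}) ξ^Z. Then √(x₁² + x₂²) ≤ (1 + ε(Z)) x₃ where ε(Z) = 1/cos²(π/2^{Z+1}) − 1. In particular, at every step (ξ^z)² + (η^z)² ≥ x₁² + x₂², so any point in the polyhedral set satisfies the cone constraint up to relative error ε(Z). -/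
open Real in
/-- Ben-Tal–Nemirovski polyhedral approximation soundness: any point
of the lifted polyhedral set satisfies the second-order cone constraint up to the
relative error `ε(Z) = 1/cos²(π/2^{Z+1}) − 1`; moreover at every step
`(ξ^z)² + (η^z)² ≥ x₁² + x₂²`. -/
theorem stmt_11 (Z : ℕ) (hZ : 0 < Z) (x₁ x₂ x₃ : ℝ) (ξ η : ℕ → ℝ)
    (h0ξ : |x₁| ≤ ξ 0) (h0η : |x₂| ≤ η 0)
    (hrecξ : ∀ z, 1 ≤ z → z ≤ Z →
      ξ z = Real.cos (π / 2 ^ (z + 1)) * ξ (z - 1) + Real.sin (π / 2 ^ (z + 1)) * η (z - 1))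
    (hrecη : ∀ z, 1 ≤ z → z ≤ Z →
      |(-Real.sin (π / 2 ^ (z + 1))) * ξ (z - 1) + Real.cos (π / 2 ^ (z + 1)) * η (z - 1)|
        ≤ η z)
    (hendξ : ξ Z ≤ x₃)
    (hendη : η Z ≤ Real.tan (π / 2 ^ (Z + 1)) * ξ Z) :
    Real.sqrt (x₁ ^ 2 + x₂ ^ 2)
        ≤ (1 + (1 / Real.cos (π / 2 ^ (Z + 1)) ^ 2 - 1)) * x₃ ∧
    ∀ z ≤ Z, x₁ ^ 2 + x₂ ^ 2 ≤ (ξ z) ^ 2 + (η z) ^ 2 := by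
  have hπ := Real.pi_pos
  have hθpos : ∀ z : ℕ, 0 < π / 2 ^ (z + 1) := fun z => by positivity
  have hθlt : ∀ z : ℕ, 1 ≤ z → π / 2 ^ (z + 1) < π / 2 := by
    intro z hz
    apply div_lt_div_of_pos_left hπ (by norm_num)
    have h4 : (4:ℝ) ≤ 2 ^ (z + 1) := by
      calc (4:ℝ) = 2 ^ 2 := by norm_num
      _ ≤ 2 ^ (z + 1) := by
        apply pow_le_pow_right₀ (by norm_num)
        omega
    linarith
  have hcos : ∀ z : ℕ, 1 ≤ z → 0 < Real.cos (π / 2 ^ (z + 1)) := by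
    intro z hz
    exact Real.cos_pos_of_mem_Ioo ⟨by linarith [hθpos z], hθlt z hz⟩
  have hsin : ∀ z : ℕ, 0 ≤ Real.sin (π / 2 ^ (z + 1)) := by
    intro z
    apply Real.sin_nonneg_of_nonneg_of_le_pi (le_of_lt (hθpos z))
    have h2 : (2:ℝ) ≤ 2 ^ (z + 1) := by
      calc (2:ℝ) = 2 ^ 1 := by norm_num
      _ ≤ 2 ^ (z + 1) := by
        apply pow_le_pow_right₀ (by norm_num) (by omega)
    have : π / 2 ^ (z + 1) ≤ π / 2 := by
      apply div_le_div_of_nonneg_left (le_of_lt hπ) (by norm_num) h2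
    linarith
  -- nonnegativity of ξ and η
  have hηnn : ∀ z ≤ Z, 0 ≤ η z := by
    intro z hzZ
    match z with
    | 0 => exact le_trans (abs_nonneg _) h0η
    | Nat.succ n =>
      exact le_trans (abs_nonneg _) (hrecη (n+1) (by omega) hzZ)
  have hξnn : ∀ z ≤ Z, 0 ≤ ξ z := by
    intro z
    induction z with
    | zero => intro _; exact le_trans (abs_nonneg _) h0ξ
    | succ n ih =>
      intro hzZ
      rw [hrecξ (n+1) (by omega) hzZ]
      simp only [Nat.add_sub_cancel]
      have h1 := ih (by omega)
      have h2 := hηnn n (by omega)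
      have h3 := hcos (n+1) (by omega)
      have h4 := hsin (n+1)
      positivity
  -- the monotone invariant
  have hmain : ∀ z ≤ Z, x₁ ^ 2 + x₂ ^ 2 ≤ (ξ z) ^ 2 + (η z) ^ 2 := by
    intro z
    induction z with
    | zero =>
      intro _
      have h1 : x₁ ^ 2 ≤ ξ 0 ^ 2 := by
        have := pow_le_pow_left₀ (abs_nonneg x₁) h0ξ 2
        rwa [sq_abs] at this
      have h2 : x₂ ^ 2 ≤ η 0 ^ 2 := by
        have := pow_le_pow_left₀ (abs_nonneg x₂) h0η 2
        rwa [sq_abs] at this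
      linarith
    | succ n ih =>
      intro hzZ
      have ihn := ih (by omega)
      have hx := hrecξ (n+1) (by omega) hzZ
      have hy := hrecη (n+1) (by omega) hzZ
      simp only [Nat.add_sub_cancel] at hx hy
      set c := Real.cos (π / 2 ^ (n + 1 + 1)) with hc
      set s := Real.sin (π / 2 ^ (n + 1 + 1)) with hs
      have hpyth : s ^ 2 + c ^ 2 = 1 := Real.sin_sq_add_cos_sq _
      have hy2 : (-s * ξ n + c * η n) ^ 2 ≤ η (n+1) ^ 2 := by
        have := pow_le_pow_left₀ (abs_nonneg _) hy 2
        rwa [sq_abs] at this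
      have hexp : (c * ξ n + s * η n) ^ 2 + (-s * ξ n + c * η n) ^ 2
          = (s ^ 2 + c ^ 2) * (ξ n ^ 2 + η n ^ 2) := by ring
      rw [hpyth, one_mul] at hexp
      rw [hx]
      linarith [hy2, hexp, ihn]
  refine ⟨?_, hmain⟩
  -- final bound
  have hZZ := hmain Z le_rfl
  have hξZ := hξnn Z le_rfl
  have hηZ := hηnn Z le_rfl
  have hcosZ := hcos Z hZ
  have hcosle : Real.cos (π / 2 ^ (Z + 1)) ≤ 1 := Real.cos_le_one _
  set θ := π / 2 ^ (Z + 1) with hθ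
  have htan : Real.tan θ = Real.sin θ / Real.cos θ := Real.tan_eq_sin_div_cos θ
  have hpyth : Real.sin θ ^ 2 + Real.cos θ ^ 2 = 1 := Real.sin_sq_add_cos_sq θ
  have hts : Real.tan θ * Real.cos θ = Real.sin θ := Real.tan_mul_cos hcosZ.ne'
  have hc2 : (0:ℝ) < Real.cos θ ^ 2 := by positivity
  have hc2le : Real.cos θ ^ 2 ≤ 1 := pow_le_one₀ hcosZ.le hcosle
  have hx3 : 0 ≤ x₃ := le_trans hξZ hendξ
  have hηsq : η Z ^ 2 ≤ Real.tan θ ^ 2 * ξ Z ^ 2 := by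
    have := pow_le_pow_left₀ hηZ hendη 2
    rwa [mul_pow] at this
  have hs2 : Real.tan θ ^ 2 * Real.cos θ ^ 2 = Real.sin θ ^ 2 := by rw [← hts]; ring
  have hbc : η Z ^ 2 * Real.cos θ ^ 2 ≤ Real.sin θ ^ 2 * ξ Z ^ 2 := by
    calc η Z ^ 2 * Real.cos θ ^ 2 ≤ (Real.tan θ ^ 2 * ξ Z ^ 2) * Real.cos θ ^ 2 :=
          mul_le_mul_of_nonneg_right hηsq hc2.le
      _ = (Real.tan θ ^ 2 * Real.cos θ ^ 2) * ξ Z ^ 2 := by ring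
      _ = Real.sin θ ^ 2 * ξ Z ^ 2 := by rw [hs2]
  have h3 : (Real.sin θ ^ 2 + Real.cos θ ^ 2) * ξ Z ^ 2 = ξ Z ^ 2 := by rw [hpyth]; ring
  have h1 : (ξ Z ^ 2 + η Z ^ 2) * Real.cos θ ^ 2 ≤ ξ Z ^ 2 := by nlinarith [hbc, h3]
  have hξx3 : ξ Z ^ 2 ≤ x₃ ^ 2 := pow_le_pow_left₀ hξZ hendξ 2
  have heq : ((1 / Real.cos θ ^ 2) * x₃) ^ 2 = x₃ ^ 2 / (Real.cos θ ^ 2 * Real.cos θ ^ 2) := by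
    rw [div_eq_mul_inv]
    ring
  have key : x₁ ^ 2 + x₂ ^ 2 ≤ ((1 / Real.cos θ ^ 2) * x₃) ^ 2 := by
    rw [heq, le_div_iff₀ (by positivity)]
    calc (x₁ ^ 2 + x₂ ^ 2) * (Real.cos θ ^ 2 * Real.cos θ ^ 2)
        ≤ (ξ Z ^ 2 + η Z ^ 2) * (Real.cos θ ^ 2 * Real.cos θ ^ 2) :=
          mul_le_mul_of_nonneg_right hZZ (by positivity)
      _ = ((ξ Z ^ 2 + η Z ^ 2) * Real.cos θ ^ 2) * Real.cos θ ^ 2 := by ring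
      _ ≤ ξ Z ^ 2 * Real.cos θ ^ 2 := mul_le_mul_of_nonneg_right h1 hc2.le
      _ ≤ ξ Z ^ 2 * 1 := mul_le_mul_of_nonneg_left hc2le (sq_nonneg _)
      _ = ξ Z ^ 2 := mul_one _
      _ ≤ x₃ ^ 2 := hξx3
  have hfac : (1 + (1 / Real.cos θ ^ 2 - 1)) = 1 / Real.cos θ ^ 2 := by ring
  rw [hfac]
  calc Real.sqrt (x₁ ^ 2 + x₂ ^ 2) ≤ Real.sqrt (((1 / Real.cos θ ^ 2) * x₃) ^ 2) :=
        Real.sqrt_le_sqrt key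
    _ = (1 / Real.cos θ ^ 2) * x₃ := Real.sqrt_sq (by positivity)
end
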